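/- Let x, y, z ∈ ℍ satisfy dist x y + dist y z = dist x z (i.e. x, y, z lie in this order on a hyperbolic geodesic). Then G⋔([x,z)) is the disjoint union of G⋔([x,y)) and G⋔([y,z)): G⋔([x,z)) = G⋔([x,y)) ∪ G⋔([y,z)) and G⋔([x,y)) ∩ G⋔([y,z)) = ∅; likewise G⋔((x,z]) is the disjoint union of G⋔((x,y]) and G⋔((y,z]). -/

import Mathlib

/- STATEMENT 5: Let x, y, z ∈ ℍ satisfy dist x y + dist y z = dist x z. Then G⋔([x,z))
is the disjoint union of G⋔([x,y)) and G⋔([y,z)), and likewise G⋔((x,z]) is the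
disjoint union of G⋔((x,y]) and G⋔((y,z]). -/

open OnePoint
open scoped UpperHalfPlane

noncomputable section

/-- The geodesic of ℍ with ideal endpoints the unordered pair `s` of boundary points:
a Euclidean half-circle for a pair of distinct reals, a vertical line for a pair
`{x, ∞}`, and ∅ for a diagonal pair. -/
def geod (s : Sym2 (OnePoint ℝ)) : Set ℍ :=
  {z | (∃ a b : ℝ, a ≠ b ∧ s = s((a : OnePoint ℝ), (b : OnePoint ℝ)) ∧
          ‖(z : ℂ) - (↑a + ↑b) / 2‖ = |b - a| / 2) ∨
       (∃ x : ℝ, s = s((x : OnePoint ℝ), ∞) ∧ z.re = x)}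

/-- The half-open hyperbolic segment `[x,y)`; the segment `(x,y]` is `segCO y x`. -/
def segCO (x y : ℍ) : Set ℍ := {z | dist x z + dist z y = dist x y} \ {y}

/-- `G⋔(I)`: the set of geodesics crossing `I` in exactly one point. -/
def Gcross (I : Set ℍ) : Set (Sym2 (OnePoint ℝ)) := {s | ∃ z, geod s ∩ I = {z}}

/-!
The upper half-plane is uniquely geodesic, and every geodesic `geod s` is a complete geodesic
line. Both facts come from moving two points (or a half-circle) onto a vertical line by an element
of `SL(2, ℝ)`, where the distance is the distance of the logarithms of the imaginary parts. Hence
`[x,z) = [x,y) ∪ [y,z)` disjointly, neither piece is a single point, and a geodesic that meets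
`[x,z)` in two points contains all of it, so it meets each piece in more than one point or not
at all.
-/

theorem Real.dist_add_dist_eq_iff {a b c : ℝ} :
    dist a b + dist b c = dist a c ↔ a ≤ b ∧ b ≤ c ∨ c ≤ b ∧ b ≤ a := by
  rw [Real.dist_eq, Real.dist_eq, Real.dist_eq, ← sub_add_sub_cancel a b c, eq_comm,
    abs_add_eq_add_abs_iff]
  simp only [sub_nonneg, sub_nonpos]
  tauto

theorem Real.dist_add_dist_eq_or {a b c d : ℝ} (hd : dist a d + dist d c = dist a c) :
    dist a d + dist d b = dist a b ∨ dist b d + dist d c = dist b c := by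
  rw [Real.dist_add_dist_eq_iff] at hd
  rw [Real.dist_add_dist_eq_iff, Real.dist_add_dist_eq_iff]
  grind

theorem Set.inter_eq_singleton_of_subset {α : Type*} {L I K : Set α} {p : α} (hIK : I ⊆ K)
    (hI : ∀ q, I ≠ {q}) (hL : ∀ u ∈ L ∩ K, ∀ v ∈ L ∩ K, u ≠ v → K ⊆ L) (h : L ∩ I = {p}) :
    L ∩ K = {p} := by
  have hp : p ∈ L ∩ I := h ▸ rfl
  refine Set.eq_singleton_iff_unique_mem.2 ⟨⟨hp.1, hIK hp.2⟩, fun q hq ↦ by_contra fun hqp ↦ ?_⟩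
  refine hI p ?_
  rw [← h, Set.inter_eq_right.2 (hIK.trans (hL q hq p ⟨hp.1, hIK hp.2⟩ hqp))]

theorem Set.inter_eq_singleton_of_inter_union_eq_singleton {α : Type*} {L I J : Set α} {p : α}
    (h : L ∩ (I ∪ J) = {p}) : L ∩ I = {p} ∨ L ∩ J = {p} := by
  have hp : p ∈ L ∩ (I ∪ J) := h ▸ rfl
  have key : ∀ K ⊆ I ∪ J, p ∈ K → L ∩ K = {p} := fun K hK hpK ↦
    Set.Subset.antisymm (h ▸ Set.inter_subset_inter_right L hK)
      (Set.singleton_subset_iff.2 ⟨hp.1, hpK⟩)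
  exact hp.2.imp (key I Set.subset_union_left) (key J Set.subset_union_right)

namespace UpperHalfPlane

open Real
open scoped MatrixGroups

theorem dist_log_im_lt {z w : ℍ} (h : z.re ≠ w.re) :
    dist (log z.im) (log w.im) < dist z w := by
  calc dist (log z.im) (log w.im) = dist (mk ⟨0, z.im⟩ z.im_pos) (mk ⟨0, w.im⟩ w.im_pos) :=
        (dist_of_re_eq (z := mk ⟨0, z.im⟩ z.im_pos) (w := mk ⟨0, w.im⟩ w.im_pos) rfl).symm
    _ < dist z w := by
      simp_rw [dist_eq]
      dsimp only [coe_mk, mk_im]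
      gcongr
      rw [arsinh_lt_arsinh]
      gcongr
      rw [Complex.dist_of_re_eq (z := ⟨0, z.im⟩) (w := ⟨0, w.im⟩) rfl, Complex.dist_eq,
        Real.dist_eq]
      simpa [sub_eq_zero, h] using Complex.abs_im_lt_norm (z := (z : ℂ) - w)

theorem re_eq_of_dist_add_dist_eq {x y z : ℍ} (hxz : x.re = z.re)
    (h : dist x y + dist y z = dist x z) : y.re = x.re := by
  by_contra hne
  have hxy := dist_log_im_lt (Ne.symm hne)
  have hyz := dist_log_im_le y z
  have := dist_triangle (log x.im) (log y.im) (log z.im)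
  rw [dist_of_re_eq hxz] at h
  linarith

def semicircle (a b : ℝ) : Set ℍ := {z | (z.re - a) * (z.re - b) + z.im ^ 2 = 0}

theorem mem_semicircle {a b : ℝ} {z : ℍ} :
    z ∈ semicircle a b ↔ (z.re - a) * (z.re - b) + z.im ^ 2 = 0 := Iff.rfl

theorem mem_semicircle_iff_norm {a b : ℝ} {z : ℍ} :
    z ∈ semicircle a b ↔ ‖(z : ℂ) - ((a : ℂ) + b) / 2‖ = |b - a| / 2 := by
  rw [← sq_eq_sq₀ (norm_nonneg _) (by positivity), Complex.sq_norm, Complex.normSq_apply, div_pow,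
    sq_abs]
  simp only [mem_semicircle, Complex.sub_re, Complex.sub_im, coe_re, coe_im,
    Complex.div_ofNat_re, Complex.div_ofNat_im, Complex.add_re, Complex.add_im,
    Complex.ofReal_re, Complex.ofReal_im]
  constructor <;> intro h <;> linear_combination h

theorem eq_of_re_eq_of_mem_semicircle {a b : ℝ} {u v : ℍ} (hu : u ∈ semicircle a b)
    (hv : v ∈ semicircle a b) (hre : u.re = v.re) : u = v := by
  have him : u.im ^ 2 = v.im ^ 2 := by
    simp only [mem_semicircle] at hu hv
    rw [hre] at hu
    linarith
  rw [UpperHalfPlane.ext_iff, Complex.ext_iff]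
  exact ⟨hre, (pow_left_inj₀ u.im_pos.le v.im_pos.le two_ne_zero).1 him⟩

theorem semicircle_eq_of_mem {a b a' b' : ℝ} {u v : ℍ} (huv : u ≠ v)
    (hu : u ∈ semicircle a b) (hv : v ∈ semicircle a b)
    (hu' : u ∈ semicircle a' b') (hv' : v ∈ semicircle a' b') :
    semicircle a b = semicircle a' b' := by
  have hre : u.re - v.re ≠ 0 :=
    sub_ne_zero.2 fun h ↦ huv (eq_of_re_eq_of_mem_semicircle hu hv h)
  simp only [mem_semicircle] at hu hv hu' hv'
  have hsum : a + b = a' + b' := by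
    refine mul_right_cancel₀ hre ?_
    linear_combination hv - hu - hv' + hu'
  have hprod : a * b = a' * b' := by
    linear_combination hu - hu' + u.re * hsum
  ext z
  simp only [mem_semicircle]
  constructor <;> intro h
  · linear_combination h + z.re * hsum - hprod
  · linear_combination h - z.re * hsum + hprod

theorem exists_mem_semicircle {u v : ℍ} (h : u.re ≠ v.re) :
    ∃ a b, a < b ∧ u ∈ semicircle a b ∧ v ∈ semicircle a b := by
  have hre : u.re - v.re ≠ 0 := sub_ne_zero.2 h
  -- `c` is the point of `ℝ` equidistant from `u` and `v`, and `r` is that distance.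
  obtain ⟨c, hc⟩ : ∃ c : ℝ, 2 * c * (u.re - v.re) = u.re ^ 2 + u.im ^ 2 - v.re ^ 2 - v.im ^ 2 :=
    ⟨(u.re ^ 2 + u.im ^ 2 - v.re ^ 2 - v.im ^ 2) / (2 * (u.re - v.re)), by field_simp⟩
  obtain ⟨r, hr0, hr⟩ : ∃ r : ℝ, 0 < r ∧ r ^ 2 = (u.re - c) ^ 2 + u.im ^ 2 :=
    ⟨√((u.re - c) ^ 2 + u.im ^ 2), by positivity, sq_sqrt (by positivity)⟩
  refine ⟨c - r, c + r, by linarith, ?_, ?_⟩ <;>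
    simp only [mem_semicircle]
  · linear_combination -hr
  · linear_combination -hr + hc

def semicircleToAxis (a b : ℝ) (hab : a < b) : SL(2, ℝ) :=
  ⟨(√(b - a))⁻¹ • !![1, -b; 1, -a], by
    have : 0 < b - a := sub_pos.2 hab
    rw [Matrix.det_smul, Matrix.det_fin_two_of, Fintype.card_fin, inv_pow, sq_sqrt this.le]
    field_simp
    ring⟩

theorem coe_semicircleToAxis_smul {a b : ℝ} (hab : a < b) (w : ℍ) :
    ((semicircleToAxis a b hab • w : ℍ) : ℂ) = (w - b) / (w - a) := by
  have hs : (((√(b - a))⁻¹ : ℝ) : ℂ) ≠ 0 := by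
    have : 0 < √(b - a) := sqrt_pos.2 (sub_pos.2 hab)
    exact_mod_cast (inv_pos.2 this).ne'
  rw [coe_specialLinearGroup_apply]
  simp only [semicircleToAxis, Algebra.algebraMap_self, Matrix.smul_of, Matrix.smul_cons,
    smul_eq_mul, mul_one, Matrix.smul_empty, Matrix.of_apply, Matrix.cons_val',
    Matrix.cons_val_zero,
    Matrix.cons_val_fin_one, Matrix.cons_val_one, RingHom.id_apply, Complex.ofReal_mul]
  rw [← mul_add, ← mul_add, mul_div_mul_left _ _ hs, Complex.ofReal_neg, Complex.ofReal_neg,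
    ← sub_eq_add_neg, ← sub_eq_add_neg]

theorem re_semicircleToAxis_smul_eq_zero_iff {a b : ℝ} (hab : a < b) {w : ℍ} :
    (semicircleToAxis a b hab • w).re = 0 ↔ w ∈ semicircle a b := by
  have hw : Complex.normSq ((w : ℂ) - a) ≠ 0 := by
    rw [Ne, Complex.normSq_eq_zero, sub_eq_zero]
    exact fun h ↦ w.im_ne_zero (by simpa using congrArg Complex.im h)
  rw [← coe_re, coe_semicircleToAxis_smul, Complex.div_re, ← add_div, div_eq_zero_iff,
    or_iff_left hw, mem_semicircle]
  simp only [Complex.sub_re, coe_re, Complex.ofReal_re, Complex.sub_im, coe_im, Complex.ofReal_im,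
    sub_zero]
  constructor <;> intro h <;> linear_combination h

theorem exists_smul_re_eq (u v : ℍ) : ∃ g : SL(2, ℝ), (g • u).re = (g • v).re := by
  by_cases h : u.re = v.re
  · exact ⟨1, by simpa using h⟩
  · obtain ⟨a, b, hab, hu, hv⟩ := exists_mem_semicircle h
    refine ⟨semicircleToAxis a b hab, ?_⟩
    rw [(re_semicircleToAxis_smul_eq_zero_iff hab).2 hu,
      (re_semicircleToAxis_smul_eq_zero_iff hab).2 hv]

theorem exists_isometry_real_mem_range_of_dist_add_dist_eq (x z : ℍ) :
    ∃ γ : ℝ → ℍ, Isometry γ ∧ ∀ y, dist x y + dist y z = dist x z → y ∈ Set.range γ := by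
  obtain ⟨g, hg⟩ := exists_smul_re_eq x z
  refine ⟨fun t ↦ g⁻¹ • mk ⟨(g • x).re, exp t⟩ (exp_pos t),
    (isometry_smul ℍ g⁻¹).comp (isometry_vertical_line _), fun y hy ↦ ⟨log (g • y).im, ?_⟩⟩
  have hy' : dist (g • x) (g • y) + dist (g • y) (g • z) = dist (g • x) (g • z) := by
    simpa only [dist_smul] using hy
  have hre : (g • y).re = (g • x).re := re_eq_of_dist_add_dist_eq hg hy'
  simp only [exp_log (g • y).im_pos, ← hre]
  rw [inv_smul_eq_iff]
  rfl

theorem dist_add_dist_eq_or {x y z w : ℍ} (hy : dist x y + dist y z = dist x z)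
    (hw : dist x w + dist w z = dist x z) :
    dist x w + dist w y = dist x y ∨ dist y w + dist w z = dist y z := by
  obtain ⟨γ, hγ, hrange⟩ := exists_isometry_real_mem_range_of_dist_add_dist_eq x z
  obtain ⟨b, rfl⟩ := hrange y hy
  obtain ⟨d, rfl⟩ := hrange w hw
  obtain ⟨a, rfl⟩ := hrange x (by simp)
  obtain ⟨c, rfl⟩ := hrange z (by simp)
  simp only [hγ.dist_eq] at hw ⊢
  exact Real.dist_add_dist_eq_or hw

end UpperHalfPlane

open UpperHalfPlane

theorem geod_coe_coe {a b : ℝ} (hab : a ≠ b) :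
    geod s((a : OnePoint ℝ), (b : OnePoint ℝ)) = semicircle a b := by
  ext z
  simp only [geod, ne_eq, Sym2.eq, Sym2.rel_iff', Prod.mk.injEq, some_eq_iff, Prod.swap_prod_mk,
    ← mem_semicircle_iff_norm, ↓existsAndEq, coe_ne_infty, and_false, false_and, or_self, and_true,
    or_false, Set.mem_ofPred_eq]
  constructor
  · rintro ⟨a', b', -, (⟨rfl, rfl⟩ | ⟨rfl, rfl⟩), hz⟩
    · exact hz
    · rw [mem_semicircle] at hz ⊢
      linarith
  · exact fun hz ↦ ⟨a, b, hab, Or.inl ⟨rfl, rfl⟩, hz⟩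

theorem geod_coe_infty (x : ℝ) : geod s((x : OnePoint ℝ), ∞) = {z | z.re = x} := by
  ext z
  simp [geod, eq_comm]

theorem geod_diag (p : OnePoint ℝ) : geod s(p, p) = ∅ := by
  ext z
  simp only [geod, Set.mem_empty_iff_false, iff_false]
  rintro (⟨a, b, hab, h, -⟩ | ⟨x, h, -⟩) <;>
    have := Sym2.mk_isDiag_iff.1 (h ▸ Sym2.mk_isDiag_iff.2 rfl)
  · exact hab (OnePoint.coe_injective this)
  · exact OnePoint.coe_ne_infty x this

theorem geod_eq_empty_or_eq_re_or_eq_semicircle (s : Sym2 (OnePoint ℝ)) :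
    geod s = ∅ ∨ (∃ x : ℝ, geod s = {z | z.re = x}) ∨
      ∃ a b : ℝ, a < b ∧ geod s = semicircle a b := by
  induction s using Sym2.ind with | _ p q => ?_
  induction p using OnePoint.rec <;> induction q using OnePoint.rec
  case infty.infty => exact Or.inl (geod_diag ∞)
  case infty.coe x => exact Or.inr (Or.inl ⟨x, by rw [Sym2.eq_swap, geod_coe_infty]⟩)
  case coe.infty x => exact Or.inr (Or.inl ⟨x, geod_coe_infty x⟩)
  case coe.coe a b =>
    rcases lt_trichotomy a b with hab | rfl | hba
    · exact Or.inr (Or.inr ⟨a, b, hab, geod_coe_coe hab.ne⟩)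
    · exact Or.inl (geod_diag a)
    · exact Or.inr (Or.inr ⟨b, a, hba, by rw [Sym2.eq_swap, geod_coe_coe hba.ne]⟩)

theorem geod_eq_re_or_eq_semicircle_of_mem {s : Sym2 (OnePoint ℝ)} {u : ℍ} (hu : u ∈ geod s) :
    (∃ x : ℝ, geod s = {z | z.re = x}) ∨ ∃ a b : ℝ, a < b ∧ geod s = semicircle a b := by
  refine (geod_eq_empty_or_eq_re_or_eq_semicircle s).resolve_left fun h ↦ ?_
  rw [h] at hu
  exact hu

theorem exists_mem_geod (u v : ℍ) : ∃ s, u ∈ geod s ∧ v ∈ geod s := by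
  by_cases h : u.re = v.re
  · exact ⟨s((u.re : OnePoint ℝ), ∞), by simp [geod_coe_infty, h]⟩
  · obtain ⟨a, b, hab, hu, hv⟩ := exists_mem_semicircle h
    exact ⟨s((a : OnePoint ℝ), (b : OnePoint ℝ)), by rw [geod_coe_coe hab.ne]; exact ⟨hu, hv⟩⟩

theorem geod_eq_of_mem {s t : Sym2 (OnePoint ℝ)} {u v : ℍ} (huv : u ≠ v)
    (hus : u ∈ geod s) (hvs : v ∈ geod s) (hut : u ∈ geod t) (hvt : v ∈ geod t) :
    geod s = geod t := by
  rcases geod_eq_re_or_eq_semicircle_of_mem hus with ⟨x, hs⟩ | ⟨a, b, hab, hs⟩ <;>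
    rcases geod_eq_re_or_eq_semicircle_of_mem hut with ⟨x', ht⟩ | ⟨a', b', hab', ht⟩ <;>
    rw [hs] at hus hvs ⊢ <;> rw [ht] at hut hvt ⊢
  · rw [← hus.out, ← hut.out]
  · exact absurd (eq_of_re_eq_of_mem_semicircle hut hvt (hus.out.trans hvs.out.symm)) huv
  · exact absurd (eq_of_re_eq_of_mem_semicircle hus hvs (hut.out.trans hvt.out.symm)) huv
  · exact semicircle_eq_of_mem huv hus hvs hut hvt

theorem mem_geod_of_dist_add_dist_eq {s : Sym2 (OnePoint ℝ)} {u v w : ℍ} (hu : u ∈ geod s)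
    (hv : v ∈ geod s) (h : dist u w + dist w v = dist u v) : w ∈ geod s := by
  rcases geod_eq_re_or_eq_semicircle_of_mem hu with ⟨x, hs⟩ | ⟨a, b, hab, hs⟩ <;>
    rw [hs] at hu hv ⊢
  · exact (re_eq_of_dist_add_dist_eq (hu.out.trans hv.out.symm) h).trans hu.out
  · rw [← re_semicircleToAxis_smul_eq_zero_iff hab] at hu hv ⊢
    refine (re_eq_of_dist_add_dist_eq (hu.trans hv.symm) ?_).trans hu
    simpa only [dist_smul] using h

section Segments

variable {x y z : ℍ}

theorem segCO_eq_union (hcol : dist x y + dist y z = dist x z) :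
    segCO x z = segCO x y ∪ segCO y z := by
  ext w
  constructor
  · rintro ⟨hw, hwz⟩
    rcases dist_add_dist_eq_or hcol hw with hxy | hyz
    · by_cases hwy : w = y
      · subst hwy
        exact Or.inr ⟨by simp, hwz⟩
      · exact Or.inl ⟨hxy, hwy⟩
    · exact Or.inr ⟨hyz, hwz⟩
  · rintro (⟨hw, hwy⟩ | ⟨hw, hwz⟩)
    · have hw : dist x w + dist w y = dist x y := hw
      have := dist_triangle x w z
      have := dist_triangle w y z
      refine ⟨show dist x w + dist w z = dist x z by linarith, fun hwz ↦ hwy ?_⟩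
      rw [Set.mem_singleton_iff] at hwy hwz ⊢
      subst hwz
      have := dist_comm w y
      exact dist_eq_zero.1 (by linarith [dist_nonneg (x := w) (y := y)])
    · have hw : dist y w + dist w z = dist y z := hw
      have := dist_triangle x w z
      have := dist_triangle x y w
      exact ⟨show dist x w + dist w z = dist x z by linarith, hwz⟩

theorem disjoint_segCO (hcol : dist x y + dist y z = dist x z) :
    Disjoint (segCO x y) (segCO y z) := by
  refine Set.disjoint_left.2 fun w ⟨hxy, hwy⟩ ⟨hyz, _⟩ ↦ hwy (dist_eq_zero.1 ?_)
  have hxy : dist x w + dist w y = dist x y := hxy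
  have hyz : dist y w + dist w z = dist y z := hyz
  linarith [dist_triangle x w z, dist_comm w y, dist_nonneg (x := w) (y := y)]

theorem segCO_self (x : ℍ) : segCO x x = ∅ := by
  refine Set.eq_empty_of_forall_notMem fun w ⟨hw, hwx⟩ ↦ hwx ?_
  have hw : dist x w + dist w x = dist x x := hw
  rw [dist_comm w x, dist_self, add_self_eq_zero, dist_eq_zero] at hw
  exact hw.symm

theorem segCO_nontrivial (hxz : x ≠ z) : (segCO x z).Nontrivial := by
  obtain ⟨γ, hγ, hrange⟩ := exists_isometry_real_mem_range_of_dist_add_dist_eq x z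
  obtain ⟨a, rfl⟩ := hrange x (by simp)
  obtain ⟨b, rfl⟩ := hrange z (by simp)
  have hab : a ≠ b := fun h ↦ hxz (congrArg γ h)
  refine ⟨γ a, ⟨by simp, hxz⟩, γ ((a + b) / 2), ⟨?_, fun h ↦ ?_⟩, fun h ↦ ?_⟩
  · show dist (γ a) (γ ((a + b) / 2)) + dist (γ ((a + b) / 2)) (γ b) = dist (γ a) (γ b)
    rw [hγ.dist_eq, hγ.dist_eq, hγ.dist_eq, Real.dist_add_dist_eq_iff]
    rcases le_total a b with h | h
    · exact Or.inl ⟨by linarith, by linarith⟩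
    · exact Or.inr ⟨by linarith, by linarith⟩
  · exact hab (by linarith [hγ.injective h])
  · exact hab (by linarith [hγ.injective h])

theorem segCO_ne_singleton (x z p : ℍ) : segCO x z ≠ {p} := by
  rcases eq_or_ne x z with rfl | hxz
  · rw [segCO_self]
    exact (Set.singleton_nonempty p).ne_empty.symm
  · exact (segCO_nontrivial hxz).ne_singleton

theorem segCO_subset_geod {s : Sym2 (OnePoint ℝ)} {u v : ℍ} (huv : u ≠ v)
    (hu : u ∈ geod s ∩ segCO x z) (hv : v ∈ geod s ∩ segCO x z) : segCO x z ⊆ geod s := by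
  obtain ⟨t, hxt, hzt⟩ := exists_mem_geod x z
  have hseg : segCO x z ⊆ geod t := fun w hw ↦ mem_geod_of_dist_add_dist_eq hxt hzt hw.1
  rwa [geod_eq_of_mem huv hu.1 hv.1 (hseg hu.2) (hseg hv.2)]

end Segments

section Crossing

variable {I J : Set ℍ}

theorem Gcross_union (hI : ∀ p, I ≠ {p}) (hJ : ∀ p, J ≠ {p})
    (hgeod : ∀ s, ∀ u ∈ geod s ∩ (I ∪ J), ∀ v ∈ geod s ∩ (I ∪ J), u ≠ v → I ∪ J ⊆ geod s) :
    Gcross (I ∪ J) = Gcross I ∪ Gcross J := by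
  ext s
  constructor
  · rintro ⟨p, hp⟩
    exact (Set.inter_eq_singleton_of_inter_union_eq_singleton hp).imp (⟨p, ·⟩) (⟨p, ·⟩)
  · rintro (⟨p, hp⟩ | ⟨p, hp⟩)
    · exact ⟨p, Set.inter_eq_singleton_of_subset Set.subset_union_left hI (hgeod s) hp⟩
    · exact ⟨p, Set.inter_eq_singleton_of_subset Set.subset_union_right hJ (hgeod s) hp⟩

theorem Gcross_inter_eq_empty (hIJ : Disjoint I J) (hI : ∀ p, I ≠ {p})
    (hgeod : ∀ s, ∀ u ∈ geod s ∩ (I ∪ J), ∀ v ∈ geod s ∩ (I ∪ J), u ≠ v → I ∪ J ⊆ geod s) :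
    Gcross I ∩ Gcross J = ∅ := by
  refine Set.eq_empty_of_forall_notMem fun s ⟨⟨p, hp⟩, ⟨q, hq⟩⟩ ↦ ?_
  have hpI : p ∈ geod s ∩ I := hp ▸ rfl
  have hqJ : q ∈ geod s ∩ J := hq ▸ rfl
  have hqp : q ∈ geod s ∩ (I ∪ J) := ⟨hqJ.1, Or.inr hqJ.2⟩
  rw [Set.inter_eq_singleton_of_subset Set.subset_union_left hI (hgeod s) hp,
    Set.mem_singleton_iff] at hqp
  exact Set.disjoint_left.1 hIJ hpI.2 (hqp ▸ hqJ.2)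

end Crossing

theorem Gcross_segCO_eq_union_and_inter_eq_empty {x y z : ℍ}
    (hcol : dist x y + dist y z = dist x z) :
    Gcross (segCO x z) = Gcross (segCO x y) ∪ Gcross (segCO y z) ∧
      Gcross (segCO x y) ∩ Gcross (segCO y z) = ∅ := by
  have hgeod : ∀ s, ∀ u ∈ geod s ∩ segCO x z, ∀ v ∈ geod s ∩ segCO x z, u ≠ v →
      segCO x z ⊆ geod s := fun _ _ hu _ hv huv ↦ segCO_subset_geod huv hu hv
  rw [segCO_eq_union hcol] at hgeod ⊢
  exact ⟨Gcross_union (segCO_ne_singleton x y) (segCO_ne_singleton y z) hgeod,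
    Gcross_inter_eq_empty (disjoint_segCO hcol) (segCO_ne_singleton x y) hgeod⟩

theorem crossing_set_disjoint_union_of_collinear (x y z : ℍ)
    (hcol : dist x y + dist y z = dist x z) :
    (Gcross (segCO x z) = Gcross (segCO x y) ∪ Gcross (segCO y z) ∧
      Gcross (segCO x y) ∩ Gcross (segCO y z) = ∅) ∧
    (Gcross (segCO z x) = Gcross (segCO y x) ∪ Gcross (segCO z y) ∧
      Gcross (segCO y x) ∩ Gcross (segCO z y) = ∅) := by
  have hcol' : dist z y + dist y x = dist z x := by
    rw [dist_comm z y, dist_comm y x, dist_comm z x, add_comm, hcol]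
  refine ⟨Gcross_segCO_eq_union_and_inter_eq_empty hcol, ?_⟩
  rw [Set.union_comm, Set.inter_comm]
  exact Gcross_segCO_eq_union_and_inter_eq_empty hcol'
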